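/- arXiv:1702.06684 — 2 statements merged into one kernel-verified Lean document; each statement's English description precedes it below -/
import Mathlib

section
/- The subgraph induced in the Hasse diagram of the Young-Fibonacci lattice by words w with f_w odd is a tree (connected and acyclic), in which every node of even rank has exactly one child and every node of odd rank has exactly two children. -/
/-!
Since `f (1 :: t) = f t` and `f (2 :: t) = (|t| + 1) * f t`, where the rank `|t|` is the sum of
the letters, `f w` is odd iff every `2` in `w` is followed by a suffix of even rank. A nonempty
such word has exactly one lower cover of the same kind, its parent: `t` if `w = 1 :: t` and
`1 :: t` if `w = 2 :: t`. Covers lower the rank by one, so every odd word is joined to `[]`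
through its ancestors, and on a cycle the vertex of maximal rank would have two parents. The
children of `w` are `1 :: w` and, when `w = 1 :: t` with `|t|` even (that is, `|w|` odd), `2 :: t`.
-/

/-- The list of words covered by `w` in the Young-Fibonacci lattice. -/
def preds : List ℕ → List (List ℕ)
  | [] => []
  | 1 :: t => [t]
  | 2 :: t => (1 :: t) :: (preds t).map (fun u => 2 :: u)
  | _ :: _ => []

theorem preds_sum_lt : ∀ (w u : List ℕ), u ∈ preds w → u.sum < w.sum := by
  intro w
  induction w using preds.induct with
  | case1 => intro u h; simp [preds] at h
  | case2 t => intro u h; simp [preds] at h; subst h; simp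
  | case3 t ih =>
      intro u h
      simp [preds] at h
      rcases h with h | ⟨v, hv, rfl⟩
      · subst h; simp
      · have := ih v hv; simpa using by omega
  | case4 x t h1 h2 => intro u h; simp [preds] at h

/-- The number of saturated chains from the empty word to `w`. -/
def f (w : List ℕ) : ℕ :=
  if w = [] then 1
  else ((preds w).attach.map (fun u => f u.1)).sum
termination_by w.sum
decreasing_by exact preds_sum_lt w u.1 u.2

/-- The product formula. -/
def fprod (w : List ℕ) : ℕ :=
  ∏ i ∈ Finset.univ.filter (fun i : Fin w.length => w.get i = 2), ((w.drop i.1).sum - 1)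

/-- Vertices: words over `{1,2}` with odd `f`. -/
def OddWord : Type := {w : List ℕ // (∀ x ∈ w, x = 1 ∨ x = 2) ∧ Odd (f w)}

/-- The subgraph of the Hasse diagram of the Young-Fibonacci lattice induced by odd words. -/
def macdonaldGraph : SimpleGraph OddWord where
  Adj v w := v.1 ∈ preds w.1 ∨ w.1 ∈ preds v.1
  symm := ⟨by intro v w h; tauto⟩
  loopless := ⟨by
    intro v h
    rcases h with h | h <;> exact absurd (preds_sum_lt _ _ h) (lt_irrefl _)⟩

namespace SimpleGraph

variable {V α : Type*} {G : SimpleGraph V}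

theorem isAcyclic_of_rank [LinearOrder α] (r : V → α)
    (hadj : ∀ ⦃u v⦄, G.Adj u v → r u ≠ r v)
    (hdown : ∀ ⦃v a b⦄, G.Adj v a → G.Adj v b → r a < r v → r b < r v → a = b) :
    G.IsAcyclic := by
  classical
  intro v c hc
  obtain ⟨m, hm, hmax⟩ := c.support.toFinset.exists_max_image r ⟨v, by simp⟩
  rw [List.mem_toFinset] at hm
  set d := c.rotate m hm
  have hd : d.IsCycle := hc.rotate hm
  have hnil := hd.not_nil
  have hlt : ∀ x ∈ d.support, G.Adj m x → r x < r m := fun x hx hmx =>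
    lt_of_le_of_ne (hmax x (by simpa [d] using hx)) (hadj hmx).symm
  exact hd.snd_ne_penultimate <| hdown (d.adj_snd hnil) (d.adj_penultimate hnil).symm
    (hlt _ (d.getVert_mem_support 1) (d.adj_snd hnil))
    (hlt _ (d.getVert_mem_support _) (d.adj_penultimate hnil).symm)

theorem connected_of_rank [Preorder α] [WellFoundedLT α] (r : V → α) (root : V)
    (hdown : ∀ v, v ≠ root → ∃ u, G.Adj u v ∧ r u < r v) : G.Connected := by
  have hreach : ∀ v, G.Reachable root v := by
    intro v
    induction v using (InvImage.wf r wellFounded_lt).induction with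
    | _ v ih =>
      by_cases hv : v = root
      · subst hv; rfl
      · obtain ⟨u, huv, hlt⟩ := hdown v hv
        exact (ih u hlt).trans huv.reachable
  exact { preconnected := fun a b => (hreach a).symm.trans (hreach b), nonempty := ⟨root⟩ }

end SimpleGraph

theorem sum_add_one_of_mem_preds : ∀ {w u : List ℕ}, u ∈ preds w → u.sum + 1 = w.sum
  | 1 :: t, u, h => by
    rw [preds, List.mem_singleton] at h
    rw [h, List.sum_cons, add_comm]
  | 2 :: t, u, h => by
    simp only [preds, List.mem_cons, List.mem_map] at h
    rcases h with rfl | ⟨v, hv, rfl⟩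
    · simp only [List.sum_cons]; omega
    · have := sum_add_one_of_mem_preds hv
      simp only [List.sum_cons]; omega
  | [], _, h | 0 :: _, _, h | (_ + 3) :: _, _, h => by simp [preds] at h

theorem f_nil : f [] = 1 := by
  rw [f]; rfl

theorem f_cons (a : ℕ) (t : List ℕ) : f (a :: t) = ((preds (a :: t)).map f).sum := by
  rw [f, if_neg (List.cons_ne_nil a t), List.attach_map_val]

theorem f_cons_one (t : List ℕ) : f (1 :: t) = f t := by
  simp [f_cons, preds]

theorem f_cons_two (t : List ℕ) : f (2 :: t) = (t.sum + 1) * f t := by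
  have hrec : ∀ u ∈ preds t, f (2 :: u) = t.sum * f u := fun u hu => by
    rw [f_cons_two u, sum_add_one_of_mem_preds hu]
  rw [f_cons, preds, List.map_cons, List.sum_cons, List.map_map, f_cons_one,
    List.map_congr_left (f := f ∘ fun u => 2 :: u) hrec, List.sum_map_mul_left]
  cases t with
  | nil => simp [preds]
  | cons a s => rw [← f_cons]; ring
termination_by t.sum
decreasing_by exact preds_sum_lt _ _ hu

def IsOddWord : List ℕ → Prop
  | [] => True
  | 1 :: t => IsOddWord t
  | 2 :: t => Even t.sum ∧ IsOddWord t
  | _ :: _ => False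

theorem odd_f_iff_isOddWord : ∀ w : List ℕ, Odd (f w) ↔ IsOddWord w
  | [] => by simp [f_nil, IsOddWord]
  | 1 :: t => by rw [f_cons_one, odd_f_iff_isOddWord t, IsOddWord]
  | 2 :: t => by
    rw [f_cons_two, Nat.odd_mul, Nat.odd_add_one, Nat.not_odd_iff_even,
      odd_f_iff_isOddWord t, IsOddWord]
  | 0 :: _ | (_ + 3) :: _ => by simp [f_cons, preds, IsOddWord]

theorem IsOddWord.mem_one_or_two : ∀ {w : List ℕ}, IsOddWord w → ∀ x ∈ w, x = 1 ∨ x = 2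
  | [], _ => by simp
  | 1 :: t, h => by simpa using mem_one_or_two (w := t) h
  | 2 :: t, h => by simpa using mem_one_or_two (w := t) h.2
  | 0 :: _, h | (_ + 3) :: _, h => h.elim

def parent : List ℕ → List ℕ
  | 1 :: t => t
  | 2 :: t => 1 :: t
  | _ => []

theorem isOddWord_parent : ∀ {w : List ℕ}, IsOddWord w → IsOddWord (parent w)
  | [], _ => trivial
  | 1 :: _, h => h
  | 2 :: _, h => h.2
  | 0 :: _, h | (_ + 3) :: _, h => h.elim

theorem parent_mem_preds : ∀ {w : List ℕ}, IsOddWord w → w ≠ [] → parent w ∈ preds w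
  | 1 :: _, _, _ | 2 :: _, _, _ => by simp [parent, preds]
  | [], _, h => absurd rfl h
  | 0 :: _, h, _ | (_ + 3) :: _, h, _ => h.elim

theorem eq_parent_of_mem_preds :
    ∀ {w u : List ℕ}, IsOddWord w → u ∈ preds w → IsOddWord u → u = parent w
  | 1 :: _, _, _, hu, _ => by simpa [preds, parent] using hu
  | 2 :: t, u, hw, hu, hodd => by
    simp only [preds, List.mem_cons, List.mem_map] at hu
    rcases hu with rfl | ⟨v, hv, rfl⟩
    · rfl
    · -- `u = 2 :: v` with `v.sum + 1 = t.sum`, so `v.sum` and `t.sum` cannot both be even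
      refine absurd hw.1 ?_
      rw [← sum_add_one_of_mem_preds hv, Nat.even_add_one, not_not]
      exact hodd.1
  | [], _, _, hu, _ | 0 :: _, _, _, hu, _ | (_ + 3) :: _, _, _, hu, _ => by simp [preds] at hu

theorem isOddWord_and_mem_preds_iff {w v : List ℕ} (hw : IsOddWord w) :
    IsOddWord v ∧ w ∈ preds v ↔
      v = 1 :: w ∨ ∃ t, w = 1 :: t ∧ v = 2 :: t ∧ Even t.sum := by
  constructor
  · rintro ⟨hv, hwv⟩
    have hpar := eq_parent_of_mem_preds hv hwv hw
    match v, hv with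
    | 1 :: _, _ => exact .inl (by rw [hpar]; rfl)
    | 2 :: t, hv => exact .inr ⟨t, hpar, rfl, hv.1⟩
    | [], _ => simp [preds] at hwv
  · rintro (rfl | ⟨t, rfl, rfl, ht⟩)
    · exact ⟨hw, by simp [preds]⟩
    · exact ⟨⟨ht, hw⟩, by simp [preds]⟩

theorem setOf_isOddWord_and_mem_preds_of_even {w : List ℕ} (hw : IsOddWord w)
    (heven : Even w.sum) : {v | IsOddWord v ∧ w ∈ preds v} = {1 :: w} := by
  ext v
  rw [Set.mem_ofPred_eq, isOddWord_and_mem_preds_iff hw, Set.mem_singleton_iff,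
    or_iff_left_iff_imp]
  rintro ⟨t, rfl, -, ht⟩
  rw [List.sum_cons, add_comm, Nat.even_add_one] at heven
  exact absurd ht heven

theorem setOf_isOddWord_and_mem_preds_of_odd {w : List ℕ} (hw : IsOddWord w)
    (hodd : Odd w.sum) : ∃ t, {v | IsOddWord v ∧ w ∈ preds v} = {1 :: w, 2 :: t} := by
  obtain ⟨t, rfl, ht⟩ : ∃ t, w = 1 :: t ∧ Even t.sum := by
    match w, hw with
    | 1 :: t, _ =>
      refine ⟨t, rfl, ?_⟩
      rwa [List.sum_cons, add_comm, Nat.odd_add_one, Nat.not_odd_iff_even] at hodd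
    | 2 :: t, hw =>
      rw [List.sum_cons, Nat.odd_add] at hodd
      exact absurd (hodd.mpr hw.1) (by decide)
    | [], _ => simp at hodd
  refine ⟨t, Set.ext fun v => ?_⟩
  simp [isOddWord_and_mem_preds_iff hw, ht]

namespace OddWord

theorem isOddWord (v : OddWord) : IsOddWord v.1 :=
  (odd_f_iff_isOddWord v.1).1 v.2.2

def ofIsOddWord {w : List ℕ} (h : IsOddWord w) : OddWord :=
  ⟨w, h.mem_one_or_two, (odd_f_iff_isOddWord w).2 h⟩

def root : OddWord := ofIsOddWord (w := []) trivial

theorem image_val_setOf_mem_preds (w : OddWord) :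
    Subtype.val '' {v : OddWord | w.1 ∈ preds v.1} = {v | IsOddWord v ∧ w.1 ∈ preds v} := by
  ext v
  constructor
  · rintro ⟨v, hv, rfl⟩
    exact ⟨isOddWord v, hv⟩
  · rintro ⟨hv, hwv⟩
    exact ⟨ofIsOddWord hv, hwv, rfl⟩

theorem ncard_setOf_mem_preds (w : OddWord) :
    {v : OddWord | w.1 ∈ preds v.1}.ncard = {v | IsOddWord v ∧ w.1 ∈ preds v}.ncard :=
  (Set.ncard_image_of_injective _ Subtype.val_injective).symm.trans
    (congrArg Set.ncard (image_val_setOf_mem_preds w))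

theorem sum_ne_of_adj {u v : OddWord} (h : macdonaldGraph.Adj u v) : u.1.sum ≠ v.1.sum := by
  rcases h with h | h
  · exact (preds_sum_lt _ _ h).ne
  · exact (preds_sum_lt _ _ h).ne'

theorem exists_adj_sum_lt {v : OddWord} (hv : v ≠ root) :
    ∃ u, macdonaldGraph.Adj u v ∧ u.1.sum < v.1.sum := by
  have hne : v.1 ≠ [] := fun h => hv (Subtype.ext h)
  have hmem := parent_mem_preds v.isOddWord hne
  exact ⟨ofIsOddWord (isOddWord_parent v.isOddWord), .inl hmem, preds_sum_lt _ _ hmem⟩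

theorem eq_parent_of_adj_of_sum_lt {v a : OddWord} (h : macdonaldGraph.Adj v a)
    (hlt : a.1.sum < v.1.sum) : a.1 = parent v.1 := by
  rcases h with h | h
  · exact absurd (preds_sum_lt _ _ h) hlt.not_gt
  · exact eq_parent_of_mem_preds v.isOddWord h a.isOddWord

end OddWord

/-- this induced subgraph is a tree; each node of even rank has exactly
one child, and each node of odd rank has exactly two children. -/
theorem macdonald_graph_is_tree :
    macdonaldGraph.IsTree ∧
    (∀ w : OddWord,
      (Even w.1.sum → {v : OddWord | w.1 ∈ preds v.1}.ncard = 1) ∧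
      (Odd w.1.sum → {v : OddWord | w.1 ∈ preds v.1}.ncard = 2)) := by
  refine ⟨⟨?_, ?_⟩, fun w => ⟨fun heven => ?_, fun hodd => ?_⟩⟩
  · exact SimpleGraph.connected_of_rank (fun v : OddWord => v.1.sum) OddWord.root
      fun _ => OddWord.exists_adj_sum_lt
  · refine SimpleGraph.isAcyclic_of_rank (fun v : OddWord => v.1.sum)
      (fun _ _ => OddWord.sum_ne_of_adj) fun _ _ _ ha hb hla hlb => Subtype.ext ?_
    rw [OddWord.eq_parent_of_adj_of_sum_lt ha hla, OddWord.eq_parent_of_adj_of_sum_lt hb hlb]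
  · rw [OddWord.ncard_setOf_mem_preds,
      setOf_isOddWord_and_mem_preds_of_even w.isOddWord heven, Set.ncard_singleton]
  · obtain ⟨t, ht⟩ := setOf_isOddWord_and_mem_preds_of_odd w.isOddWord hodd
    rw [OddWord.ncard_setOf_mem_preds, ht, Set.ncard_pair (by simp)]
end

section
/- Let p be a prime. A word w over {1,2} has f_w coprime to p if and only if w can be written as a₀a₁⋯a_k where the block a₀ has rank (letter-sum) less than p and each block a_i for i ≥ 1 has rank exactly p. -/
open List

theorem fprod_nil : fprod [] = 1 := rfl

theorem fprod_cons (x : ℕ) (t : List ℕ) :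
    fprod (x :: t) = (if x = 2 then t.sum + 1 else 1) * fprod t := by
  rw [fprod, fprod, Finset.prod_filter, Finset.prod_filter]
  refine (Fin.prod_univ_succ (n := t.length) _).trans (congrArg₂ _ ?_ rfl)
  by_cases hx : x = 2 <;> simp [hx]
  omega

-- `t.sum + 1` is the factor that the letter 2 heading the suffix `2 :: t` contributes to `fprod w`.
def NoFactorDvd (p : ℕ) (w : List ℕ) : Prop :=
  ∀ t, 2 :: t <:+ w → ¬ p ∣ t.sum + 1

section NoFactorDvd

variable {p : ℕ}

theorem noFactorDvd_nil : NoFactorDvd p [] := fun _ h => by simpa using h.length_le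

theorem noFactorDvd_cons {x : ℕ} {t : List ℕ} :
    NoFactorDvd p (x :: t) ↔ (x = 2 → ¬ p ∣ t.sum + 1) ∧ NoFactorDvd p t := by
  simp only [NoFactorDvd, suffix_cons_iff, or_imp, forall_and, cons.injEq]
  constructor
  · rintro ⟨hx, ht⟩
    exact ⟨fun h2 => hx t ⟨h2.symm, rfl⟩, ht⟩
  · rintro ⟨hx, ht⟩
    exact ⟨fun s ⟨h2, hs⟩ => hs ▸ hx h2.symm, ht⟩

theorem coprime_fprod_iff (hp : p.Prime) {w : List ℕ} :
    (fprod w).Coprime p ↔ NoFactorDvd p w := by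
  induction w with
  | nil => simp [fprod_nil, noFactorDvd_nil]
  | cons x t ih =>
    rw [fprod_cons, Nat.coprime_mul_iff_left, ih, noFactorDvd_cons, Nat.coprime_comm,
      hp.coprime_iff_not_dvd]
    by_cases hx : x = 2 <;> simp [hx, hp.one_lt.ne']

theorem noFactorDvd_of_sum_le {w : List ℕ} (h : w.sum ≤ p) : NoFactorDvd p w := by
  rintro t ⟨u, rfl⟩
  simp only [sum_append, sum_cons] at h
  exact Nat.not_dvd_of_pos_of_lt (Nat.succ_pos _) (by omega)

theorem noFactorDvd_append_iff {u v : List ℕ} (hv : p ∣ v.sum) :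
    NoFactorDvd p (u ++ v) ↔ NoFactorDvd p u ∧ NoFactorDvd p v := by
  induction u with
  | nil => simp [noFactorDvd_nil]
  | cons x u ih =>
    rw [cons_append, noFactorDvd_cons, ih, noFactorDvd_cons, sum_append, add_right_comm,
      Nat.dvd_add_left hv, and_assoc]

theorem dvd_sum_flatten {blocks : List (List ℕ)} (h : ∀ b ∈ blocks, b.sum = p) :
    p ∣ blocks.flatten.sum := by
  rw [sum_flatten]
  exact dvd_sum (forall_mem_map.mpr fun b hb => (h b hb).symm ▸ dvd_refl p)

theorem noFactorDvd_flatten {blocks : List (List ℕ)} (h : ∀ b ∈ blocks, b.sum = p) :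
    NoFactorDvd p blocks.flatten := by
  induction blocks with
  | nil => exact noFactorDvd_nil
  | cons b bs ih =>
    have hbs : ∀ c ∈ bs, c.sum = p := fun c hc => h c (mem_cons_of_mem b hc)
    rw [flatten_cons, noFactorDvd_append_iff (dvd_sum_flatten hbs)]
    exact ⟨noFactorDvd_of_sum_le (h b mem_cons_self).le, ih hbs⟩

end NoFactorDvd

theorem exists_suffix_sum_eq_or_jump {w : List ℕ} (hw : ∀ x ∈ w, x = 1 ∨ x = 2) {m : ℕ}
    (hm : m ≤ w.sum) : (∃ v, v <:+ w ∧ v.sum = m) ∨ ∃ t, 2 :: t <:+ w ∧ t.sum + 1 = m := by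
  induction w with
  | nil => exact Or.inl ⟨[], suffix_refl _, (Nat.le_zero.mp hm).symm⟩
  | cons x t ih =>
    rcases hm.eq_or_lt with rfl | hlt
    · exact Or.inl ⟨x :: t, suffix_refl _, rfl⟩
    have hx := hw x mem_cons_self
    rw [sum_cons] at hlt
    by_cases hmt : m ≤ t.sum
    · have ht := suffix_cons x t
      rcases ih (fun y hy => hw y (mem_cons_of_mem x hy)) hmt with ⟨v, hv, hs⟩ | ⟨s, hs, h1⟩
      · exact Or.inl ⟨v, hv.trans ht, hs⟩
      · exact Or.inr ⟨s, hs.trans ht, h1⟩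
    · obtain rfl : x = 2 := by omega
      exact Or.inr ⟨t, suffix_refl _, by omega⟩

theorem exists_blocks_of_noFactorDvd {p : ℕ} (hp : 0 < p) {w : List ℕ}
    (hw : ∀ x ∈ w, x = 1 ∨ x = 2) (h : NoFactorDvd p w) :
    ∃ (a₀ : List ℕ) (blocks : List (List ℕ)),
      w = a₀ ++ blocks.flatten ∧ a₀.sum < p ∧ ∀ b ∈ blocks, b.sum = p := by
  by_cases hsmall : w.sum < p
  · exact ⟨w, [], by simp, hsmall, by simp⟩
  rcases exists_suffix_sum_eq_or_jump hw (not_lt.mp hsmall) with ⟨v, ⟨u, huv⟩, hv⟩ | ⟨t, ht, h1⟩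
  · have hlt : u.sum < w.sum := by rw [← huv, sum_append]; omega
    subst huv
    have hu := ((noFactorDvd_append_iff (hv ▸ dvd_refl p)).mp h).1
    obtain ⟨a₀, blocks, rfl, ha₀, hblocks⟩ :=
      exists_blocks_of_noFactorDvd hp (fun x hx => hw x (mem_append_left v hx)) hu
    refine ⟨a₀, blocks ++ [v], by simp, ha₀, fun b hb => ?_⟩
    rcases mem_append.mp hb with hb | hb
    · exact hblocks b hb
    · rwa [mem_singleton.mp hb]
  · exact absurd (h1 ▸ dvd_refl p) (h t ht)
termination_by w.sum

theorem noFactorDvd_iff_exists_blocks {p : ℕ} (hp : 0 < p) {w : List ℕ}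
    (hw : ∀ x ∈ w, x = 1 ∨ x = 2) :
    NoFactorDvd p w ↔ ∃ (a₀ : List ℕ) (blocks : List (List ℕ)),
      w = a₀ ++ blocks.flatten ∧ a₀.sum < p ∧ ∀ b ∈ blocks, b.sum = p := by
  refine ⟨exists_blocks_of_noFactorDvd hp hw, ?_⟩
  rintro ⟨a₀, blocks, rfl, ha₀, hblocks⟩
  exact (noFactorDvd_append_iff (dvd_sum_flatten hblocks)).mpr
    ⟨noFactorDvd_of_sum_le ha₀.le, noFactorDvd_flatten hblocks⟩

/-- `f w` is coprime to the prime `p` iff `w = a₀ a₁ ⋯ a_k` where the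
block `a₀` has rank `< p` and all the other blocks have rank exactly `p`. -/
theorem coprime_characterization (p : ℕ) (hp : p.Prime) (w : List ℕ)
    (hw : ∀ x ∈ w, x = 1 ∨ x = 2) :
    Nat.Coprime (fprod w) p ↔
      ∃ (a₀ : List ℕ) (blocks : List (List ℕ)),
        w = a₀ ++ blocks.flatten ∧ a₀.sum < p ∧ ∀ b ∈ blocks, b.sum = p :=
  (coprime_fprod_iff hp).trans (noFactorDvd_iff_exists_blocks hp.pos hw)
end
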